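/- For all n ≥ 0, the integral over [-1,1] of (1-t)·P_n^{(1,1)}(t) dt equals (-1)^n·4/(n+2). -/

import Mathlib

/-!
Multiplying the sum formula by `1 - t = -2 · (t - 1)/2` turns `(1 - t) P_n^{(1,1)}(t)` into a
combination of the products `((t - 1)/2)^(s+1) ((t + 1)/2)^(n-s)`, whose integrals over `[-1, 1]`
are Beta integrals `B(s + 2, n - s + 1)`. After the factorials cancel, the `s`-th summand
contributes `4/(n + 2) · (-1)^s C(n+1, s)`, and the alternating sum of the binomial row `n + 1`
without its last term is `(-1)^n`.
-/

open MeasureTheory intervalIntegral Finset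

/-- The Jacobi polynomial `P_n^{(a,b)}` with nonnegative integer parameters,
given by the standard finite-sum formula, normalized by
`P_n^{(a,b)}(1) = (a+1)_n / n!`. -/
noncomputable def jacobiP (a b n : ℕ) (x : ℝ) : ℝ :=
  ∑ s ∈ Finset.range (n + 1),
    (Nat.choose (n + a) (n - s) : ℝ) * (Nat.choose (n + b) s : ℝ) *
      ((x - 1) / 2) ^ s * ((x + 1) / 2) ^ (n - s)

open Nat

theorem integral_pow_mul_one_sub_pow (a b : ℕ) :
    ∫ x in (0 : ℝ)..1, x ^ a * (1 - x) ^ b = (a ! * b ! / (a + b + 1)! : ℝ) := by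
  induction b generalizing a with
  | zero =>
    simp only [pow_zero, mul_one, integral_pow, factorial_succ]
    push_cast
    field_simp
    ring
  | succ b ih =>
    have hsplit : ∀ x : ℝ, x ^ a * (1 - x) ^ (b + 1)
        = x ^ a * (1 - x) ^ b - x ^ (a + 1) * (1 - x) ^ b := fun x => by ring
    simp_rw [hsplit]
    rw [intervalIntegral.integral_sub (by apply Continuous.intervalIntegrable; fun_prop)
      (by apply Continuous.intervalIntegrable; fun_prop), ih, ih]
    rw [show a + 1 + b + 1 = a + (b + 1) + 1 by ring]
    simp only [factorial_succ, show a + (b + 1) + 1 = (a + b + 1) + 1 by ring]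
    push_cast
    field_simp
    ring

theorem integral_sub_one_div_two_pow_mul_add_one_div_two_pow (a b : ℕ) :
    ∫ t in (-1 : ℝ)..1, ((t - 1) / 2) ^ a * ((t + 1) / 2) ^ b
      = (2 * (-1) ^ a * a ! * b ! / (a + b + 1)! : ℝ) := by
  have hsub : ∀ t : ℝ, ((t - 1) / 2) ^ a * ((t + 1) / 2) ^ b
      = (-1) ^ a * ((t / 2 + 1 / 2) ^ b * (1 - (t / 2 + 1 / 2)) ^ a) := fun t => by
    rw [show (t - 1) / 2 = -(1 - (t / 2 + 1 / 2)) by ring, neg_pow]; ring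
  simp_rw [hsub, intervalIntegral.integral_const_mul]
  rw [integral_comp_div_add (fun x => x ^ b * (1 - x) ^ a) two_ne_zero]
  norm_num [integral_pow_mul_one_sub_pow, add_comm b a]
  ring

theorem sum_range_neg_one_pow_mul_choose_succ (n : ℕ) :
    ∑ s ∈ range (n + 1), ((-1) ^ s * (n + 1).choose s : ℝ) = (-1) ^ n := by
  exact_mod_cast (Int.alternating_sum_range_choose_eq_choose (n := n) (m := n)).trans (by simp)

theorem integral_one_sub_mul_jacobiP_one_one_summand {n s : ℕ} (hs : s ≤ n) :
    ∫ t in (-1 : ℝ)..1, (1 - t) * ((n + 1).choose (n - s) * (n + 1).choose s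
        * ((t - 1) / 2) ^ s * ((t + 1) / 2) ^ (n - s))
      = 4 / (n + 2) * ((-1) ^ s * (n + 1).choose s) := by
  have hchoose : ((n + 1).choose (n - s) * (n - s)! * (s + 1)! : ℝ) = (n + 1)! := by
    have := choose_mul_factorial_mul_factorial (show n - s ≤ n + 1 by omega)
    rw [show n + 1 - (n - s) = s + 1 by omega] at this
    exact_mod_cast this
  have hrw : ∀ t : ℝ, (1 - t) * ((n + 1).choose (n - s) * (n + 1).choose s
        * ((t - 1) / 2) ^ s * ((t + 1) / 2) ^ (n - s))
      = -2 * (n + 1).choose (n - s) * (n + 1).choose s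
        * (((t - 1) / 2) ^ (s + 1) * ((t + 1) / 2) ^ (n - s)) := fun t => by ring
  simp_rw [hrw, intervalIntegral.integral_const_mul,
    integral_sub_one_div_two_pow_mul_add_one_div_two_pow,
    show s + 1 + (n - s) + 1 = (n + 1) + 1 by omega, factorial_succ (n + 1)]
  push_cast
  field_simp
  linear_combination (4 * (n + 1).choose s * (n + 2) * (-1) ^ s : ℝ) * hchoose

theorem integral_one_sub_mul_jacobiP_one_one (n : ℕ) :
    ∫ t in (-1 : ℝ)..1, (1 - t) * jacobiP 1 1 n t
      = (-1 : ℝ) ^ n * 4 / ((n : ℝ) + 2) := by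
  simp_rw [jacobiP, mul_sum]
  rw [intervalIntegral.integral_finsetSum fun s _ =>
      by apply Continuous.intervalIntegrable; fun_prop,
    sum_congr rfl fun s hs => integral_one_sub_mul_jacobiP_one_one_summand
      (Nat.le_of_lt_succ (mem_range.mp hs)),
    ← mul_sum, sum_range_neg_one_pow_mul_choose_succ]
  ring
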